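/- Theorem (moment dynamics): Let ρ_t solve dρ_t/dt = 𝓛(ρ_t) with 𝓛(ρ) = Σ_k λ_k(U_k ρ U_k† - ρ), λ_k > 0, U_k = e^{-(i/2)𝔠^T H_k 𝔠}, H_k = -H_k^T = -H̃_k. Then the M-th order moments ⟨⊗_{m=1}^M 𝔠⟩_t := tr(ρ_t ⊗_{m=1}^M 𝔠) evolve linearly: ⟨⊗_{m=1}^M 𝔠⟩_t = e^{t Σ_k λ_k(⊗_{m=1}^M O_k - I_{(2n)^M})} ⟨⊗_{m=1}^M 𝔠⟩_0, where O_k = e^{-iEH_k}. -/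

import Mathlib

open Matrix BigOperators

attribute [local instance] Matrix.normedAddCommGroup Matrix.normedSpace

instance Matrix.clmIsTopologicalRing (m : Type*) [Fintype m] :
    IsTopologicalRing (Matrix m m ℂ →L[ℂ] Matrix m m ℂ) :=
  @NonUnitalSeminormedRing.toIsTopologicalRing _
    (@SeminormedRing.toNonUnitalSeminormedRing _
      (@NormedRing.toSeminormedRing _ ContinuousLinearMap.toNormedRing))

noncomputable def Emat (n : ℕ) : Matrix (Fin n ⊕ Fin n) (Fin n ⊕ Fin n) ℂ :=
  Matrix.fromBlocks 0 1 1 0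

noncomputable def quadForm (n : ℕ) (c : Fin n ⊕ Fin n → Matrix (Fin (2^n)) (Fin (2^n)) ℂ)
    (H : Matrix (Fin n ⊕ Fin n) (Fin n ⊕ Fin n) ℂ) : Matrix (Fin (2^n)) (Fin (2^n)) ℂ :=
  ∑ j, ∑ k, H j k • (c j * c k)

noncomputable def cTensor (n M : ℕ) (c : Fin n ⊕ Fin n → Matrix (Fin (2^n)) (Fin (2^n)) ℂ)
    (J : Fin M → Fin n ⊕ Fin n) : Matrix (Fin (2^n)) (Fin (2^n)) ℂ :=
  (List.ofFn fun m => c (J m)).prod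

noncomputable def kronPow (n M : ℕ) (O : Matrix (Fin n ⊕ Fin n) (Fin n ⊕ Fin n) ℂ) :
    Matrix (Fin M → Fin n ⊕ Fin n) (Fin M → Fin n ⊕ Fin n) ℂ :=
  fun J J' => ∏ m, O (J m) (J' m)

/-!
Conjugation by `Uₖ = exp(-(i/2) 𝔠ᵀHₖ𝔠)` is the exponential of the commutator with a quadratic
form, and by the CARs that commutator maps each mode `𝔠ⱼ` to a linear combination of modes with
coefficient matrix `-i E Hₖ`; hence `Uₖ† 𝔠ⱼ Uₖ = ∑ (Oₖ)ⱼⱼ' 𝔠ⱼ'`. Conjugation is multiplicative, so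
the monomial `𝔠_J` goes to `∑ (⊗Oₖ)_{JJ'} 𝔠_{J'}`, and by cyclicity of the trace the moment
vector of `𝓛ρ` is `A` applied to that of `ρ`, with `A = ∑ λₖ(⊗Oₖ - I)`. This intertwining of `𝓛`
with `A` passes to the exponentials `e^{t𝓛}` and `e^{tA}` term by term in the power series.
-/

open NormedSpace

theorem exp_add_of_commute_complex {𝔸 : Type*} [NormedRing 𝔸] [NormedAlgebra ℂ 𝔸]
    [CompleteSpace 𝔸] {x y : 𝔸} (h : Commute x y) : exp (x + y) = exp x * exp y :=
  exp_add_of_commute_of_mem_ball (𝕂 := ℂ) h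
    ((expSeries_radius_eq_top ℂ 𝔸).symm ▸ edist_lt_top _ _)
    ((expSeries_radius_eq_top ℂ 𝔸).symm ▸ edist_lt_top _ _)

theorem comp_exp_eq_exp_comp {V W : Type*} [NormedAddCommGroup V] [NormedSpace ℂ V]
    [CompleteSpace V] [NormedAddCommGroup W] [NormedSpace ℂ W] [CompleteSpace W]
    {Φ : V →L[ℂ] W} {T : V →L[ℂ] V} {S : W →L[ℂ] W} (h : Φ ∘L T = S ∘L Φ) :
    Φ ∘L exp T = exp S ∘L Φ := by
  have hpow : ∀ k : ℕ, Φ ∘L (T ^ k) = (S ^ k) ∘L Φ := by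
    intro k
    induction k with
    | zero => rfl
    | succ k ih =>
      rw [pow_succ, pow_succ, ContinuousLinearMap.mul_def, ContinuousLinearMap.mul_def,
        ← ContinuousLinearMap.comp_assoc, ih, ContinuousLinearMap.comp_assoc, h,
        ContinuousLinearMap.comp_assoc]
  have hT := (exp_series_hasSum_exp' (𝕂 := ℂ) T).mapL (ContinuousLinearMap.compL ℂ V V W Φ)
  have hS := (exp_series_hasSum_exp' (𝕂 := ℂ) S).mapL
    ((ContinuousLinearMap.compL ℂ V W W).flip Φ)
  simp only [ContinuousLinearMap.compL_apply, ContinuousLinearMap.flip_apply,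
    ContinuousLinearMap.comp_smul, ContinuousLinearMap.smul_comp, hpow] at hT hS
  exact hT.unique hS

section MatrixExp

variable {m : Type*} [Fintype m] [DecidableEq m]

/- `Norms.Operator` provides the normed-ring structure on matrices that the power-series
argument needs; `exp` itself depends only on the topology, which that norm does not change. -/
theorem map_matrix_exp {𝔹 : Type*} [NormedRing 𝔹] [NormedAlgebra ℂ 𝔹] [CompleteSpace 𝔹]
    (f : Matrix m m ℂ →ₐ[ℂ] 𝔹) (x : Matrix m m ℂ) : f (exp x) = exp (f x) :=
  open scoped Norms.Operator in
  map_exp_of_mem_ball (𝕂 := ℂ) f f.toLinearMap.continuous_of_finiteDimensional x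
    ((expSeries_radius_eq_top ℂ (Matrix m m ℂ)).symm ▸ edist_lt_top _ _)

theorem map_matrix_exp_op {𝔹 : Type*} [NormedRing 𝔹] [NormedAlgebra ℂ 𝔹] [CompleteSpace 𝔹]
    (f : (Matrix m m ℂ)ᵐᵒᵖ →ₐ[ℂ] 𝔹) (x : Matrix m m ℂ) :
    f (MulOpposite.op (exp x)) = exp (f (MulOpposite.op x)) := by
  open scoped Norms.Operator in
  rw [← exp_op]
  exact map_exp_of_mem_ball (𝕂 := ℂ) f f.toLinearMap.continuous_of_finiteDimensional _
    ((expSeries_radius_eq_top ℂ (Matrix m m ℂ)ᵐᵒᵖ).symm ▸ edist_lt_top _ _)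

theorem exp_mem_unitary_of_conjTranspose_eq_neg {X : Matrix m m ℂ} (h : Xᴴ = -X) :
    exp X ∈ unitary (Matrix m m ℂ) := by
  rw [Unitary.mem_iff, star_eq_conjTranspose, ← exp_conjTranspose, h,
    ← Matrix.exp_add_of_commute _ _ (Commute.refl X).neg_left,
    ← Matrix.exp_add_of_commute _ _ (Commute.refl X).neg_right,
    neg_add_cancel, add_neg_cancel, exp_zero, and_self]

end MatrixExp

section MatrixAction

variable {ι : Type*} [Fintype ι] [DecidableEq ι]

noncomputable def Matrix.toCLMAlgEquiv : Matrix ι ι ℂ ≃ₐ[ℂ] ((ι → ℂ) →L[ℂ] (ι → ℂ)) :=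
  Matrix.toLinAlgEquiv'.trans (Module.End.toContinuousLinearMap (ι → ℂ))

theorem Matrix.toCLMAlgEquiv_apply (B : Matrix ι ι ℂ) (w : ι → ℂ) :
    toCLMAlgEquiv B w = B *ᵥ w := rfl

theorem Matrix.exp_toCLMAlgEquiv (B : Matrix ι ι ℂ) :
    exp (toCLMAlgEquiv B) = toCLMAlgEquiv (exp B) :=
  (map_matrix_exp toCLMAlgEquiv.toAlgHom B).symm

/- The linear-combination map `w ↦ ∑ wᵢ vᵢ` intertwines `Bᵀ` with `T`. -/
theorem exp_apply_eq_sum_of_apply_eq_sum {V : Type*} [NormedAddCommGroup V] [NormedSpace ℂ V]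
    [CompleteSpace V] (T : V →L[ℂ] V) (v : ι → V) (B : Matrix ι ι ℂ)
    (h : ∀ i, T (v i) = ∑ j, B i j • v j) (i : ι) : exp T (v i) = ∑ j, exp B i j • v j := by
  let Ψ : (ι → ℂ) →L[ℂ] V := LinearMap.toContinuousLinearMap (Fintype.linearCombination ℂ v)
  have hΨ : Ψ ∘L Matrix.toCLMAlgEquiv Bᵀ = T ∘L Ψ := by
    ext w : 1
    simp only [ContinuousLinearMap.comp_apply, Ψ, LinearMap.coe_toContinuousLinearMap',
      Fintype.linearCombination_apply, Matrix.toCLMAlgEquiv_apply, map_sum, map_smul, h,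
      Finset.smul_sum, smul_smul, Matrix.mulVec, dotProduct, Matrix.transpose_apply,
      Finset.sum_smul]
    rw [Finset.sum_comm]
    simp only [mul_comm]
  have := congr($(comp_exp_eq_exp_comp hΨ) (Pi.single i 1))
  simpa [Ψ, Matrix.exp_toCLMAlgEquiv, Matrix.exp_transpose, Matrix.toCLMAlgEquiv_apply,
    Matrix.mulVec_single_one, Fintype.linearCombination_apply] using this.symm

/- `a ↦ a * X - X * a` is right multiplication by `X` plus left multiplication by `-X`; these
commute, so its exponential is conjugation by `exp X`. -/
set_option synthInstance.maxHeartbeats 400000 in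
theorem exp_neg_mul_mul_exp_eq_sum {m : Type*} [Fintype m] [DecidableEq m] (X : Matrix m m ℂ)
    (v : ι → Matrix m m ℂ) (B : Matrix ι ι ℂ) (h : ∀ i, v i * X - X * v i = ∑ j, B i j • v j)
    (i : ι) : exp (-X) * v i * exp X = ∑ j, exp B i j • v j := by
  let toCLM := (Module.End.toContinuousLinearMap (𝕜 := ℂ) (Matrix m m ℂ)).toAlgHom
  let mulLeft := toCLM.comp (Algebra.lmul ℂ (Matrix m m ℂ))
  let mulRight := toCLM.comp (Algebra.lsmul ℂ ℂ (Matrix m m ℂ) (A := (Matrix m m ℂ)ᵐᵒᵖ))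
  have hcomm : Commute (mulRight (MulOpposite.op X)) (mulLeft (-X)) := by
    ext1 b
    change -X * b * X = -X * (b * X)
    rw [mul_assoc]
  have hconj : exp (mulRight (MulOpposite.op X) + mulLeft (-X)) (v i)
      = exp (-X) * v i * exp X := by
    rw [exp_add_of_commute_complex hcomm, ← map_matrix_exp, ← map_matrix_exp_op]
    rfl
  rw [← hconj]
  refine exp_apply_eq_sum_of_apply_eq_sum _ v B (fun j => ?_) i
  change v j * X + -X * v j = _
  rw [neg_mul, ← sub_eq_add_neg, h]

end MatrixAction

theorem list_prod_ofFn_sum_smul {R A ι : Type*} [CommSemiring R] [Semiring A] [Algebra R A]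
    [Fintype ι] : ∀ {M : ℕ} (a : Fin M → ι → R) (x : ι → A),
    (List.ofFn fun m => ∑ i, a m i • x i).prod
      = ∑ I : Fin M → ι, (∏ m, a m (I m)) • (List.ofFn fun m => x (I m)).prod
  | 0, a, x => by simp
  | M + 1, a, x => by
    rw [List.ofFn_succ, List.prod_cons, list_prod_ofFn_sum_smul (fun m => a m.succ) x,
      Finset.sum_mul_sum, ← (Fin.consEquiv fun _ => ι).sum_comp, Fintype.sum_prod_type]
    simp [Fin.prod_univ_succ, List.ofFn_succ, Fin.consEquiv, smul_smul, mul_comm]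

section Moments

variable {m ι : Type*} [Fintype m] (a : ι → Matrix m m ℂ)

noncomputable def expectationCLM : Matrix m m ℂ →L[ℂ] (ι → ℂ) :=
  LinearMap.toContinuousLinearMap
    (LinearMap.pi fun i => (Matrix.traceLinearMap m ℂ ℂ).comp (LinearMap.mulRight ℂ (a i)))

theorem expectationCLM_apply (ρ : Matrix m m ℂ) (i : ι) :
    expectationCLM a ρ i = (ρ * a i).trace := rfl

theorem expectationCLM_conj [Fintype ι] {U : Matrix m m ℂ} {W : Matrix ι ι ℂ}
    (h : ∀ i, Uᴴ * a i * U = ∑ j, W i j • a j) (ρ : Matrix m m ℂ) :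
    expectationCLM a (U * ρ * Uᴴ) = W *ᵥ expectationCLM a ρ := by
  ext i
  rw [expectationCLM_apply, Matrix.mul_assoc, Matrix.mul_assoc, Matrix.trace_mul_comm,
    Matrix.mul_assoc, h, Matrix.mul_sum, Matrix.trace_sum]
  simp [Matrix.mulVec, dotProduct, expectationCLM_apply]

theorem expectationCLM_lindblad [Fintype ι] [DecidableEq ι] {κ : Type*} [Fintype κ]
    (lam : κ → ℂ) (U : κ → Matrix m m ℂ) (W : κ → Matrix ι ι ℂ)
    (h : ∀ k i, (U k)ᴴ * a i * U k = ∑ j, W k i j • a j) (ρ : Matrix m m ℂ) :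
    expectationCLM a (∑ k, lam k • (U k * ρ * (U k)ᴴ - ρ))
      = (∑ k, lam k • (W k - 1)) *ᵥ expectationCLM a ρ := by
  simp only [map_sum, map_smul, map_sub, expectationCLM_conj a (h _), Matrix.sum_mulVec,
    Matrix.smul_mulVec, Matrix.sub_mulVec, Matrix.one_mulVec]

end Moments

theorem Emat_mul_mul_Emat_apply (n : ℕ) (A : Matrix (Fin n ⊕ Fin n) (Fin n ⊕ Fin n) ℂ)
    (p q : Fin n ⊕ Fin n) : (Emat n * A * Emat n) p q = A p.swap q.swap := by
  rcases p with p | p <;> rcases q with q | q <;>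
    simp [Emat, Matrix.mul_apply, Fintype.sum_sum_type, Matrix.one_apply]

section Fermion

variable {n : ℕ} (c : Fin n ⊕ Fin n → Matrix (Fin (2 ^ n)) (Fin (2 ^ n)) ℂ)

theorem mul_quadForm_sub_quadForm_mul (G : Matrix (Fin n ⊕ Fin n) (Fin n ⊕ Fin n) ℂ)
    (hCAR : ∀ j k, c j * c k + c k * c j = G j k • (1 : Matrix (Fin (2 ^ n)) (Fin (2 ^ n)) ℂ))
    (H : Matrix (Fin n ⊕ Fin n) (Fin n ⊕ Fin n) ℂ) (j : Fin n ⊕ Fin n) :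
    c j * quadForm n c H - quadForm n c H * c j = ∑ a, (G * (H - Hᵀ)) j a • c a := by
  have hpair : ∀ a b, c j * (c a * c b) - c a * c b * c j = G j a • c b - G j b • c a := by
    intro a b
    have hb : c a * c j * c b + c a * c b * c j = G j b • c a := by
      rw [mul_assoc, mul_assoc, ← mul_add, hCAR, mul_smul_comm, mul_one]
    rw [← mul_assoc, eq_sub_of_add_eq (hCAR j a), sub_mul, smul_mul_assoc, one_mul, ← hb]
    abel
  have hexpand : c j * quadForm n c H - quadForm n c H * c j
      = ∑ a, ∑ b, H a b • (c j * (c a * c b) - c a * c b * c j) := by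
    simp only [quadForm, Finset.mul_sum, Finset.sum_mul, mul_smul_comm, smul_mul_assoc,
      ← Finset.sum_sub_distrib, smul_sub]
  have hcoef : ∀ a, (G * (H - Hᵀ)) j a = ∑ b, G j b * H b a - ∑ b, G j b * H a b := by
    simp [Matrix.mul_apply, mul_sub]
  simp only [hexpand, hpair, hcoef, smul_sub, smul_smul, sub_smul, Finset.sum_smul,
    Finset.sum_sub_distrib]
  rw [Finset.sum_comm (f := fun a b => (H a b * G j a) • c b)]
  simp only [mul_comm]

theorem quadForm_conjTranspose (hadj : ∀ j, (c j)ᴴ = c (Sum.swap j))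
    (H : Matrix (Fin n ⊕ Fin n) (Fin n ⊕ Fin n) ℂ) :
    (quadForm n c H)ᴴ = quadForm n c (Emat n * H.map (starRingEnd ℂ) * Emat n)ᵀ := by
  let σ := Equiv.sumComm (Fin n) (Fin n)
  simp only [quadForm, conjTranspose_sum, conjTranspose_smul, conjTranspose_mul, hadj,
    transpose_apply, Emat_mul_mul_Emat_apply, map_apply]
  rw [Finset.sum_comm, ← σ.sum_comp]
  refine Finset.sum_congr rfl fun j _ => ?_
  rw [← σ.sum_comp]
  simp [σ]

theorem conjTranspose_neg_I_half_smul_quadForm (hadj : ∀ j, (c j)ᴴ = c (Sum.swap j))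
    (H : Matrix (Fin n ⊕ Fin n) (Fin n ⊕ Fin n) ℂ) (hanti : H = -Hᵀ)
    (htilde : Emat n * H.map (starRingEnd ℂ) * Emat n = -H) :
    (-((Complex.I / 2) • quadForm n c H))ᴴ = -(-((Complex.I / 2) • quadForm n c H)) := by
  rw [conjTranspose_neg, conjTranspose_smul, quadForm_conjTranspose c hadj, htilde,
    transpose_neg, ← hanti, star_div₀, Complex.star_def, Complex.conj_I]
  simp [neg_div, map_ofNat]

theorem exp_smul_quadForm_mul_mul_exp
    (hCAR : ∀ j k, c j * c k + c k * c j = Emat n j k • (1 : Matrix (Fin (2 ^ n)) (Fin (2 ^ n)) ℂ))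
    (H : Matrix (Fin n ⊕ Fin n) (Fin n ⊕ Fin n) ℂ) (hanti : H = -Hᵀ) (j : Fin n ⊕ Fin n) :
    exp ((Complex.I / 2) • quadForm n c H) * c j * exp (-((Complex.I / 2) • quadForm n c H))
      = ∑ j', exp (-(Complex.I • (Emat n * H))) j j' • c j' := by
  have hHT : Hᵀ = -H := (neg_eq_iff_eq_neg.mpr hanti).symm
  have hbracket : ∀ a, c a * -((Complex.I / 2) • quadForm n c H)
      - -((Complex.I / 2) • quadForm n c H) * c a
      = ∑ b, (-(Complex.I • (Emat n * H))) a b • c b := by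
    intro a
    calc c a * -((Complex.I / 2) • quadForm n c H) - -((Complex.I / 2) • quadForm n c H) * c a
        = (-(Complex.I / 2)) • (c a * quadForm n c H - quadForm n c H * c a) := by
          rw [smul_sub, neg_smul, neg_smul, mul_neg, neg_mul, mul_smul_comm, smul_mul_assoc]
      _ = ∑ b, (-(Complex.I • (Emat n * H))) a b • c b := by
          rw [mul_quadForm_sub_quadForm_mul c _ hCAR, hHT, Finset.smul_sum]
          refine Finset.sum_congr rfl fun b _ => ?_
          rw [smul_smul, sub_neg_eq_add, Matrix.mul_add]
          simp only [Matrix.add_apply, Matrix.neg_apply, Matrix.smul_apply, smul_eq_mul]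
          ring_nf
  simpa only [neg_neg] using exp_neg_mul_mul_exp_eq_sum _ c _ hbracket j

theorem conjTranspose_mul_cTensor_mul {M : ℕ} {U : Matrix (Fin (2 ^ n)) (Fin (2 ^ n)) ℂ}
    (hU : U ∈ unitary _) (O : Matrix (Fin n ⊕ Fin n) (Fin n ⊕ Fin n) ℂ)
    (hO : ∀ j, Uᴴ * c j * U = ∑ j', O j j' • c j') (J : Fin M → Fin n ⊕ Fin n) :
    Uᴴ * cTensor n M c J * U = ∑ J', kronPow n M O J J' • cTensor n M c J' := by
  have hprod := map_list_prod (Unitary.conjStarAlgAut ℂ _ ⟨U, hU⟩).symm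
    (List.ofFn fun m => c (J m))
  simp only [Unitary.conjStarAlgAut_symm_apply, List.map_ofFn, Function.comp_def,
    star_eq_conjTranspose, hO] at hprod
  exact hprod.trans (list_prod_ofFn_sum_smul _ _)

end Fermion

theorem statement10_general (n M K : ℕ) (c : Fin n ⊕ Fin n → Matrix (Fin (2^n)) (Fin (2^n)) ℂ)
    (hadj : ∀ j, (c j)ᴴ = c (Sum.swap j))
    (hCAR : ∀ j k, c j * c k + c k * c j = Emat n j k • (1 : Matrix (Fin (2^n)) (Fin (2^n)) ℂ))
    (lam : Fin K → ℝ)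
    (H : Fin K → Matrix (Fin n ⊕ Fin n) (Fin n ⊕ Fin n) ℂ)
    (hanti : ∀ k, H k = -(H k)ᵀ)
    (htilde : ∀ k, Emat n * (H k).map (starRingEnd ℂ) * Emat n = -(H k))
    (U : Fin K → Matrix (Fin (2^n)) (Fin (2^n)) ℂ)
    (hUdef : ∀ k, U k = NormedSpace.exp (-((Complex.I / 2) • quadForm n c (H k))))
    (O : Fin K → Matrix (Fin n ⊕ Fin n) (Fin n ⊕ Fin n) ℂ)
    (hOdef : ∀ k, O k = NormedSpace.exp (-(Complex.I • (Emat n * H k))))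
    (L : Matrix (Fin (2^n)) (Fin (2^n)) ℂ →L[ℂ] Matrix (Fin (2^n)) (Fin (2^n)) ℂ)
    (hL : ∀ ρ, L ρ = ∑ k, (lam k : ℂ) • (U k * ρ * (U k)ᴴ - ρ))
    (ρ₀ : Matrix (Fin (2^n)) (Fin (2^n)) ℂ)
    (t : ℝ) (J : Fin M → Fin n ⊕ Fin n) :
    ((NormedSpace.exp ((t : ℂ) • L)) ρ₀ * cTensor n M c J).trace
      = ∑ J', (NormedSpace.exp ((t : ℂ) • ∑ k, (lam k : ℂ) • (kronPow n M (O k) - 1))) J J'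
          * (ρ₀ * cTensor n M c J').trace := by
  set A := ∑ k, (lam k : ℂ) • (kronPow n M (O k) - 1)
  have hskew k := conjTranspose_neg_I_half_smul_quadForm c hadj (H k) (hanti k) (htilde k)
  have hmode : ∀ k j, (U k)ᴴ * c j * U k = ∑ j', O k j j' • c j' := by
    intro k j
    rw [hUdef, ← exp_conjTranspose, hskew, neg_neg, hOdef]
    exact exp_smul_quadForm_mul_mul_exp c hCAR (H k) (hanti k) j
  have htensor k := conjTranspose_mul_cTensor_mul (M := M) c
    (hUdef k ▸ exp_mem_unitary_of_conjTranspose_eq_neg (hskew k)) (O k) (hmode k)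
  have hgen : expectationCLM (cTensor n M c) ∘L ((t : ℂ) • L)
      = Matrix.toCLMAlgEquiv ((t : ℂ) • A) ∘L expectationCLM (cTensor n M c) := by
    ext1 ρ
    rw [ContinuousLinearMap.comp_apply, ContinuousLinearMap.comp_apply, _root_.smul_apply,
      map_smul, hL, expectationCLM_lindblad _ _ _ _ htensor, Matrix.toCLMAlgEquiv_apply,
      Matrix.smul_mulVec]
  have hexp := congr($(comp_exp_eq_exp_comp hgen) ρ₀ J)
  rwa [Matrix.exp_toCLMAlgEquiv] at hexp

/-- Theorem, moment dynamics: for `ρ_t = e^{t𝓛}ρ₀` with Poisson-type GKSL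
generator with unitary jumps `Uₖ = e^{-(i/2)𝔠ᵀHₖ𝔠}`, `Hₖ = -Hₖᵀ = -H̃ₖ`,
`⟨⊗ₘ𝔠⟩_t = e^{tΣₖλₖ(⊗ₘOₖ − I)}⟨⊗ₘ𝔠⟩₀` with `Oₖ = e^{-iEHₖ}`. -/
theorem statement10 (n M K : ℕ) (c : Fin n ⊕ Fin n → Matrix (Fin (2^n)) (Fin (2^n)) ℂ)
    (hadj : ∀ j, (c j)ᴴ = c (Sum.swap j))
    (hCAR : ∀ j k, c j * c k + c k * c j = Emat n j k • (1 : Matrix (Fin (2^n)) (Fin (2^n)) ℂ))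
    (lam : Fin K → ℝ) (hlam : ∀ k, 0 < lam k)
    (H : Fin K → Matrix (Fin n ⊕ Fin n) (Fin n ⊕ Fin n) ℂ)
    (hanti : ∀ k, H k = -(H k)ᵀ)
    (htilde : ∀ k, Emat n * (H k).map (starRingEnd ℂ) * Emat n = -(H k))
    (U : Fin K → Matrix (Fin (2^n)) (Fin (2^n)) ℂ)
    (hUdef : ∀ k, U k = NormedSpace.exp (-((Complex.I / 2) • quadForm n c (H k))))
    (O : Fin K → Matrix (Fin n ⊕ Fin n) (Fin n ⊕ Fin n) ℂ)
    (hOdef : ∀ k, O k = NormedSpace.exp (-(Complex.I • (Emat n * H k))))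
    (L : Matrix (Fin (2^n)) (Fin (2^n)) ℂ →L[ℂ] Matrix (Fin (2^n)) (Fin (2^n)) ℂ)
    (hL : ∀ ρ, L ρ = ∑ k, (lam k : ℂ) • (U k * ρ * (U k)ᴴ - ρ))
    (ρ₀ : Matrix (Fin (2^n)) (Fin (2^n)) ℂ)
    (hM : 1 ≤ M) (t : ℝ) (ht : 0 ≤ t) (J : Fin M → Fin n ⊕ Fin n) :
    ((NormedSpace.exp ((t : ℂ) • L)) ρ₀ * cTensor n M c J).trace
      = ∑ J', (NormedSpace.exp ((t : ℂ) • ∑ k, (lam k : ℂ) • (kronPow n M (O k) - 1))) J J'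
          * (ρ₀ * cTensor n M c J').trace :=
  statement10_general n M K c hadj hCAR lam H hanti htilde U hUdef O hOdef L hL ρ₀ t J
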